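/- Let C ⊆ 𝔽₂ⁿ be a binary linear code. There exists a subset H ⊆ C⊥ whose 𝔽₂-linear span equals C⊥ and such that every extreme point of the polytope Q(H) lies in {0,1}ⁿ (i.e., Q(H) has no pseudocodewords), if and only if P(C) = Q(C⊥). -/

import Mathlib

open scoped BigOperators

/-- A binary linear code of length `n`: an `𝔽₂`-linear subspace of `𝔽₂ⁿ`. -/
abbrev Code (n : ℕ) : Type := Submodule (ZMod 2) (Fin n → ZMod 2)

/-- The `𝔽₂`-dimension of a code. -/
noncomputable def codeDim {n : ℕ} (C : Code n) : ℕ := Module.finrank (ZMod 2) C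

/-- The dual code `C⊥ = {x : ∀ c ∈ C, ∑ i, x i * c i = 0}`. -/
def dualCode {n : ℕ} (C : Code n) : Code n where
  carrier := {x | ∀ c ∈ C, ∑ i, x i * c i = 0}
  add_mem' := by
    intro a b ha hb c hc
    simp only [Set.mem_setOf_eq] at ha hb
    simp [Pi.add_apply, add_mul, Finset.sum_add_distrib, ha c hc, hb c hc]
  zero_mem' := by intro c hc; simp
  smul_mem' := by
    intro t x hx c hc
    simp only [Set.mem_setOf_eq] at hx
    simp [Pi.smul_apply, smul_eq_mul, mul_assoc, ← Finset.mul_sum, hx c hc]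

/-- Restriction (projection) of a code onto the coordinates in a finset `s`,
viewed as a code of length `s.card`. -/
noncomputable def restrictCode {n : ℕ} (C : Code n) (s : Finset (Fin n)) : Code s.card :=
  C.map (LinearMap.funLeft (ZMod 2) (ZMod 2) (fun j => (s.orderIsoOfFin rfl j).1))

/-- `(J, Jᶜ)` is a `k`-separation of `C`. -/
noncomputable def IsKSep {n : ℕ} (k : ℕ) (C : Code n) (J : Finset (Fin n)) : Prop :=
  k ≤ J.card ∧ k ≤ Jᶜ.card ∧
    codeDim (restrictCode C J) + codeDim (restrictCode C Jᶜ) ≤ codeDim C + (k - 1)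

/-- `(J, Jᶜ)` is an exact `k`-separation of `C`. -/
noncomputable def IsExactKSep {n : ℕ} (k : ℕ) (C : Code n) (J : Finset (Fin n)) : Prop :=
  k ≤ J.card ∧ k ≤ Jᶜ.card ∧
    codeDim (restrictCode C J) + codeDim (restrictCode C Jᶜ) = codeDim C + (k - 1)

/-- `C` is `k`-connected: it has no `k'`-separation for any `1 ≤ k' < k`. -/
noncomputable def KConnected {n : ℕ} (k : ℕ) (C : Code n) : Prop :=
  ∀ k' : ℕ, 1 ≤ k' → k' < k → ∀ J : Finset (Fin n), ¬ IsKSep k' C J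

/-- A `3`-connected code is internally `4`-connected if all its `3`-separations are minimal. -/
noncomputable def Internally4Connected {n : ℕ} (C : Code n) : Prop :=
  KConnected 3 C ∧ ∀ J : Finset (Fin n), IsKSep 3 C J → (J.card = 3 ∨ Jᶜ.card = 3)

/-- The submodule of words vanishing on all coordinates in `Y`. -/
def zeroOn {n : ℕ} (Y : Finset (Fin n)) : Code n where
  carrier := {x | ∀ i ∈ Y, x i = 0}
  add_mem' := by intro a b ha hb i hi; simp [Pi.add_apply, ha i hi, hb i hi]
  zero_mem' := by intro i _; rfl
  smul_mem' := by intro t x hx i hi; simp [Pi.smul_apply, hx i hi]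

/-- The punctured code `C/X`: project away the coordinates in `X`. -/
noncomputable def punctureCode {n : ℕ} (C : Code n) (X : Finset (Fin n)) : Code Xᶜ.card :=
  restrictCode C Xᶜ

/-- The shortened code `C∖Y`. -/
noncomputable def shortenCode {n : ℕ} (C : Code n) (Y : Finset (Fin n)) : Code Yᶜ.card :=
  restrictCode (C ⊓ zeroOn Y) Yᶜ

/-- The minor `C/X∖Y` of `C` (for disjoint `X`, `Y`). -/
noncomputable def minorCode {n : ℕ} (C : Code n) (X Y : Finset (Fin n)) :
    Code ((X ∪ Y)ᶜ.card) :=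
  restrictCode (C ⊓ zeroOn Y) (X ∪ Y)ᶜ

/-- Equivalence of codes: one is obtained from the other by a bijective relabelling
(permutation) of coordinates. -/
def CodeEquiv {m m' : ℕ} (D : Code m) (D' : Code m') : Prop :=
  ∃ e : Fin m ≃ Fin m',
    D' = D.map (LinearMap.funLeft (ZMod 2) (ZMod 2) e.symm)

/-- `D` is equivalent to a minor of `C`. -/
noncomputable def EquivToMinor {m n : ℕ} (D : Code m) (C : Code n) : Prop :=
  ∃ X Y : Finset (Fin n), Disjoint X Y ∧ CodeEquiv D (minorCode C X Y)

/-- `D` is equivalent to a proper minor of `C`. -/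
noncomputable def EquivToProperMinor {m n : ℕ} (D : Code m) (C : Code n) : Prop :=
  ∃ X Y : Finset (Fin n), Disjoint X Y ∧ (X ∪ Y).Nonempty ∧ CodeEquiv D (minorCode C X Y)

/-- The word `(0,…,0,1)`. -/
def unitLast (n : ℕ) : Fin n → ZMod 2 := fun i => if (i : ℕ) = n - 1 then 1 else 0

/-- The word `(1,0,…,0)`. -/
def unitFirst (n : ℕ) : Fin n → ZMod 2 := fun i => if (i : ℕ) = 0 then 1 else 0

/-- The word `(0,…,0,1,1,1)`. -/
def omegaLast (n : ℕ) : Fin n → ZMod 2 := fun i => if n - 3 ≤ (i : ℕ) then 1 else 0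

/-- The word `(1,1,1,0,…,0)`. -/
def omegaFirst (n : ℕ) : Fin n → ZMod 2 := fun i => if (i : ℕ) < 3 then 1 else 0

/-- Codes `C ⊆ 𝔽₂ⁿ`, `C' ⊆ 𝔽₂^n'` (with `n, n' ≥ 3`) are 2-summable. -/
def TwoSummable {n n' : ℕ} (C : Code n) (C' : Code n') : Prop :=
  3 ≤ n ∧ 3 ≤ n' ∧ unitLast n ∉ C ∧ unitLast n ∉ dualCode C ∧
    unitFirst n' ∉ C' ∧ unitFirst n' ∉ dualCode C'

/-- The 2-sum `C ⊕₂ C'`. -/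
def twoSum {n n' : ℕ} (C : Code n) (C' : Code n') (hn : 3 ≤ n) (hn' : 3 ≤ n') :
    Code (n - 1 + (n' - 1)) where
  carrier := {x | ∃ c ∈ C, ∃ c' ∈ C',
    c ⟨n - 1, by omega⟩ = c' ⟨0, by omega⟩ ∧
    ∀ i : Fin (n - 1 + (n' - 1)),
      x i = if h : (i : ℕ) < n - 1 then c ⟨(i : ℕ), by omega⟩
            else c' ⟨(i : ℕ) - (n - 1) + 1, by have := i.isLt; omega⟩}
  add_mem' := by
    rintro a b ⟨c, hc, c', hc', he, ha⟩ ⟨d, hd, d', hd', he', hb⟩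
    refine ⟨c + d, C.add_mem hc hd, c' + d', C'.add_mem hc' hd',
      by simp [Pi.add_apply, he, he'], fun i => ?_⟩
    by_cases h : (i : ℕ) < n - 1 <;> simp [Pi.add_apply, ha i, hb i, h]
  zero_mem' := by
    refine ⟨0, C.zero_mem, 0, C'.zero_mem, rfl, fun i => ?_⟩
    by_cases h : (i : ℕ) < n - 1 <;> simp [h]
  smul_mem' := by
    rintro t x ⟨c, hc, c', hc', he, hx⟩
    refine ⟨t • c, C.smul_mem t hc, t • c', C'.smul_mem t hc',
      by simp [Pi.smul_apply, he], fun i => ?_⟩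
    by_cases h : (i : ℕ) < n - 1 <;> simp [Pi.smul_apply, hx i, h]

/-- Condition (A1): no word of `C` supported on the last three coordinates has
Hamming weight 1 or 2 there. -/
def NoLowWtTail {n : ℕ} (C : Code n) : Prop :=
  ∀ c ∈ C, (∀ i : Fin n, (i : ℕ) < n - 3 → c i = 0) →
    ((∀ i : Fin n, n - 3 ≤ (i : ℕ) → c i = 0) ∨ (∀ i : Fin n, n - 3 ≤ (i : ℕ) → c i = 1))

/-- Condition (A2): no word of `C'` supported on the first three coordinates has
Hamming weight 1 or 2 there. -/
def NoLowWtHead {n : ℕ} (C : Code n) : Prop :=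
  ∀ c ∈ C, (∀ i : Fin n, 3 ≤ (i : ℕ) → c i = 0) →
    ((∀ i : Fin n, (i : ℕ) < 3 → c i = 0) ∨ (∀ i : Fin n, (i : ℕ) < 3 → c i = 1))

/-- Codes `C ⊆ 𝔽₂ⁿ`, `C' ⊆ 𝔽₂^n'` (with `n, n' ≥ 7`) are 3-summable: (A1), (A2), (A3). -/
def ThreeSummable {n n' : ℕ} (C : Code n) (C' : Code n') : Prop :=
  7 ≤ n ∧ 7 ≤ n' ∧ NoLowWtTail C ∧ NoLowWtTail (dualCode C) ∧
    NoLowWtHead C' ∧ NoLowWtHead (dualCode C') ∧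
    omegaLast n ∈ C ∧ omegaFirst n' ∈ C'

/-- The 3-sum `C ⊕₃ C'`. -/
def threeSum {n n' : ℕ} (C : Code n) (C' : Code n') (hn : 7 ≤ n) (hn' : 7 ≤ n') :
    Code (n - 3 + (n' - 3)) where
  carrier := {x | ∃ c ∈ C, ∃ c' ∈ C',
    (∀ t : Fin 3, c ⟨n - 3 + (t : ℕ), by have := t.isLt; omega⟩
        = c' ⟨(t : ℕ), by have := t.isLt; omega⟩) ∧
    ∀ i : Fin (n - 3 + (n' - 3)),
      x i = if h : (i : ℕ) < n - 3 then c ⟨(i : ℕ), by omega⟩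
            else c' ⟨(i : ℕ) - (n - 3) + 3, by have := i.isLt; omega⟩}
  add_mem' := by
    rintro a b ⟨c, hc, c', hc', he, ha⟩ ⟨d, hd, d', hd', he', hb⟩
    refine ⟨c + d, C.add_mem hc hd, c' + d', C'.add_mem hc' hd',
      fun t => by simp [Pi.add_apply, he t, he' t], fun i => ?_⟩
    by_cases h : (i : ℕ) < n - 3 <;> simp [Pi.add_apply, ha i, hb i, h]
  zero_mem' := by
    refine ⟨0, C.zero_mem, 0, C'.zero_mem, fun t => rfl, fun i => ?_⟩
    by_cases h : (i : ℕ) < n - 3 <;> simp [h]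
  smul_mem' := by
    rintro t x ⟨c, hc, c', hc', he, hx⟩
    refine ⟨t • c, C.smul_mem t hc, t • c', C'.smul_mem t hc',
      fun s => by simp [Pi.smul_apply, he s], fun i => ?_⟩
    by_cases h : (i : ℕ) < n - 3 <;> simp [Pi.smul_apply, hx i, h]

/-- Codes `C`, `C'` (with `n, n' ≥ 7`) are 3̄-summable: (A1), (A2), (A3'). -/
def ThreeBarSummable {n n' : ℕ} (C : Code n) (C' : Code n') : Prop :=
  7 ≤ n ∧ 7 ≤ n' ∧ NoLowWtTail C ∧ NoLowWtTail (dualCode C) ∧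
    NoLowWtHead C' ∧ NoLowWtHead (dualCode C') ∧
    omegaLast n ∈ dualCode C ∧ omegaFirst n' ∈ dualCode C'

/-- `C̄ = C ∪ ((0,…,0,1,1,1) + C)`, as a submodule. -/
def extendLast {n : ℕ} (C : Code n) : Code n :=
  C ⊔ Submodule.span (ZMod 2) {omegaLast n}

/-- `C̄' = C' ∪ ((1,1,1,0,…,0) + C')`, as a submodule. -/
def extendFirst {n : ℕ} (C : Code n) : Code n :=
  C ⊔ Submodule.span (ZMod 2) {omegaFirst n}

/-- The 3̄-sum `C ⊕̄₃ C' = C̄ ⊕₃ C̄'`. -/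
def threeBarSum {n n' : ℕ} (C : Code n) (C' : Code n') (hn : 7 ≤ n) (hn' : 7 ≤ n') :
    Code (n - 3 + (n' - 3)) :=
  threeSum (extendLast C) (extendFirst C') hn hn'

/-- The minimum Hamming distance (minimum weight of a nonzero codeword). -/
noncomputable def minDist {n : ℕ} (C : Code n) : ℕ :=
  sInf {w | ∃ c ∈ C, c ≠ 0 ∧ hammingNorm c = w}

/-- `C` is graphic: it has a parity-check matrix, each column of which has at most
two nonzero entries (a vertex–edge incidence matrix of a multigraph). -/
def IsGraphic {n : ℕ} (C : Code n) : Prop :=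
  ∃ (m : ℕ) (H : Matrix (Fin m) (Fin n) (ZMod 2)),
    C = LinearMap.ker (Matrix.mulVecLin H) ∧
    ∀ j : Fin n, ({i : Fin m | H i j ≠ 0} : Set (Fin m)).ncard ≤ 2

/-- `C` is regular: some parity-check matrix of `C` has a totally unimodular signing. -/
def IsRegularCode {n : ℕ} (C : Code n) : Prop :=
  ∃ (m : ℕ) (H : Matrix (Fin m) (Fin n) (ZMod 2)),
    C = LinearMap.ker (Matrix.mulVecLin H) ∧
    ∃ A : Matrix (Fin m) (Fin n) ℝ,
      (∀ i j, H i j = 0 → A i j = 0) ∧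
      (∀ i j, H i j = 1 → (A i j = 1 ∨ A i j = -1)) ∧
      A.IsTotallyUnimodular

/-- The 3×7 parity-check matrix of the `[7,4]` Hamming code: the `j`-th column is the
binary representation of `j` (for `j = 1, …, 7`). -/
def hammingMatrix : Matrix (Fin 3) (Fin 7) (ZMod 2) :=
  fun i j => if Nat.testBit ((j : ℕ) + 1) (i : ℕ) then 1 else 0

/-- The `[7,4]` Hamming code `H₇`. -/
def hammingCode : Code 7 := LinearMap.ker (Matrix.mulVecLin hammingMatrix)

/-- Generator matrix of `C(K₅)⊥`. -/
def K5perpGen : Matrix (Fin 4) (Fin 10) (ZMod 2) :=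
  !![1,0,0,0,1,1,1,0,0,0;
     0,1,0,0,1,0,0,1,1,0;
     0,0,1,0,0,1,0,1,0,1;
     0,0,0,1,0,0,1,0,1,1]

/-- The `[10,4]` code `C(K₅)⊥`. -/
def codeK5perp : Code 10 := Submodule.span (ZMod 2) (Set.range (fun i => K5perpGen i))

/-- Generator matrix of `C(K₃,₃)⊥`. -/
def K33perpGen : Matrix (Fin 5) (Fin 9) (ZMod 2) :=
  !![1,0,0,0,0,1,1,0,0;
     0,1,0,0,0,0,1,1,0;
     0,0,1,0,0,0,0,1,1;
     0,0,0,1,0,1,0,0,1;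
     0,0,0,0,1,1,1,1,1]

/-- The `[9,5]` code `C(K₃,₃)⊥`. -/
def codeK33perp : Code 9 := Submodule.span (ZMod 2) (Set.range (fun i => K33perpGen i))

/-- Parity-check matrix of `R₁₀`. -/
def R10Matrix : Matrix (Fin 5) (Fin 10) (ZMod 2) :=
  !![1,1,0,0,1,1,0,0,0,0;
     1,1,1,0,0,0,1,0,0,0;
     0,1,1,1,0,0,0,1,0,0;
     0,0,1,1,1,0,0,0,1,0;
     1,0,0,1,1,0,0,0,0,1]

/-- The `[10,5]` code `R₁₀`. -/
def codeR10 : Code 10 := LinearMap.ker (Matrix.mulVecLin R10Matrix)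

/-- The embedding `𝔽₂ⁿ ↪ ℝⁿ` identifying `𝔽₂` with `{0,1} ⊆ ℝ`. -/
def toReal {n : ℕ} (c : Fin n → ZMod 2) : Fin n → ℝ := fun i => ((c i).val : ℝ)

/-- The codeword polytope `P(C)`: the convex hull in `ℝⁿ` of a set of codewords. -/
def codewordPolytope {n : ℕ} (C : Set (Fin n → ZMod 2)) : Set (Fin n → ℝ) :=
  convexHull ℝ (toReal '' C)

/-- The fundamental polytope `Q(H) = ⋂_{h ∈ H} P(h⊥)` (with `Q(∅) = [0,1]ⁿ`). -/
def Qpoly {n : ℕ} (H : Set (Fin n → ZMod 2)) : Set (Fin n → ℝ) :=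
  {x | ∀ i, x i ∈ Set.Icc (0 : ℝ) 1} ∩
    ⋂ h ∈ H, codewordPolytope {c | ∑ i, h i * c i = 0}

/-- `C` is geometrically perfect: `P(C) = Q(C⊥)`. -/
def GeomPerfect {n : ℕ} (C : Code n) : Prop :=
  codewordPolytope (C : Set (Fin n → ZMod 2)) = Qpoly (dualCode C : Set (Fin n → ZMod 2))

/-- A family of binary linear codes (one set of codes for each length), closed under
taking codes equivalent to minors of its members. -/
noncomputable def MinorClosedFamily (F : ∀ n : ℕ, Set (Code n)) : Prop :=
  ∀ (n m : ℕ) (C : Code n) (D : Code m), C ∈ F n → EquivToMinor D C → D ∈ F m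

/-- An almost-graphic family of codes. -/
noncomputable def AlmostGraphic (F : ∀ n : ℕ, Set (Code n)) : Prop :=
  MinorClosedFamily F ∧
  ∃ D : ∀ n : ℕ, Set (Code n),
    (∀ n, D n ⊆ F n) ∧
    {p : (n : ℕ) × Code n | p.2 ∈ D p.1}.Finite ∧
    ∀ (n : ℕ) (C : Code n), C ∈ F n → KConnected 2 C →
      (IsGraphic C ∨ C ∈ D n) ∨
      (∃ (n₁ n₂ : ℕ) (hn₁ : 3 ≤ n₁) (hn₂ : 3 ≤ n₂) (C₁ : Code n₁) (C₂ : Code n₂),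
        TwoSummable C₁ C₂ ∧ EquivToMinor C₁ C ∧ EquivToMinor C₂ C ∧
        (IsGraphic C₁ ∨ C₁ ∈ D n₁) ∧ KConnected 2 C₂ ∧
        CodeEquiv C (twoSum C₁ C₂ hn₁ hn₂)) ∨
      (∃ (n₁ n₂ : ℕ) (hn₁ : 7 ≤ n₁) (hn₂ : 7 ≤ n₂) (C₁ : Code n₁) (C₂ : Code n₂),
        ThreeBarSummable C₁ C₂ ∧ EquivToMinor C₁ C ∧ EquivToMinor C₂ C ∧
        (IsGraphic C₁ ∨ C₁ ∈ D n₁) ∧ KConnected 2 C₂ ∧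
        CodeEquiv C (threeBarSum C₁ C₂ hn₁ hn₂))

noncomputable def dotForm (n : ℕ) : LinearMap.BilinForm (ZMod 2) (Fin n → ZMod 2) :=
  LinearMap.mk₂ (ZMod 2) (fun x y => ∑ i, x i * y i)
    (fun a b y => by simp [add_mul, Finset.sum_add_distrib])
    (fun t a y => by simp [Finset.mul_sum, mul_assoc])
    (fun a b c => by simp [mul_add, Finset.sum_add_distrib])
    (fun t a y => by simp [Finset.mul_sum, mul_left_comm])

lemma dotForm_apply {n : ℕ} (x y : Fin n → ZMod 2) : dotForm n x y = ∑ i, x i * y i := rfl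

lemma dotForm_comm {n : ℕ} (x y : Fin n → ZMod 2) : dotForm n x y = dotForm n y x := by
  simp [dotForm_apply, mul_comm]

lemma dotForm_refl {n : ℕ} : (dotForm n).IsRefl := fun x y h => by rwa [dotForm_comm]

lemma dotForm_nondeg {n : ℕ} : (dotForm n).Nondegenerate := by
  refine LinearMap.BilinForm.Nondegenerate.ofSeparatingLeft ?_
  intro x hx
  funext j
  have := hx (Pi.single j 1)
  simpa [dotForm_apply, Pi.single_apply, Finset.sum_ite_eq'] using this

lemma dualCode_eq_orthogonal {n : ℕ} (C : Code n) :
    dualCode C = (dotForm n).orthogonal C := by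
  ext x
  constructor
  · intro hx c hc
    have := hx c hc
    rw [dotForm_comm]
    exact this
  · intro hx c hc
    have := hx c hc
    rw [dotForm_comm] at this
    exact this

lemma dual_dual {n : ℕ} (C : Code n) : dualCode (dualCode C) = C := by
  rw [dualCode_eq_orthogonal, dualCode_eq_orthogonal,
    LinearMap.BilinForm.orthogonal_orthogonal dotForm_nondeg dotForm_refl]

lemma toReal_injective {n : ℕ} : Function.Injective (toReal (n := n)) := by
  intro a b h
  funext i
  have : ((a i).val : ℝ) = ((b i).val : ℝ) := congrFun h i
  exact ZMod.val_injective 2 (Nat.cast_injective this)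

lemma toReal_mem_cube {n : ℕ} (c : Fin n → ZMod 2) (i : Fin n) :
    toReal c i ∈ Set.Icc (0 : ℝ) 1 := by
  have h1 : (c i).val ≤ 1 := Nat.lt_succ_iff.mp (ZMod.val_lt (c i))
  show ((c i).val : ℝ) ∈ Set.Icc (0:ℝ) 1
  refine ⟨by positivity, ?_⟩
  show ((c i).val : ℝ) ≤ 1
  exact_mod_cast h1

lemma cube_convex {n : ℕ} : Convex ℝ {x : Fin n → ℝ | ∀ i, x i ∈ Set.Icc (0:ℝ) 1} := by
  have : {x : Fin n → ℝ | ∀ i, x i ∈ Set.Icc (0:ℝ) 1}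
      = Set.pi Set.univ (fun _ => Set.Icc (0:ℝ) 1) := by
    ext x; simp only [Set.mem_setOf_eq, Set.mem_pi, Set.mem_univ, true_implies]
  rw [this]
  exact convex_pi fun i _ => convex_Icc 0 1

lemma cube_compact {n : ℕ} : IsCompact {x : Fin n → ℝ | ∀ i, x i ∈ Set.Icc (0:ℝ) 1} := by
  have : {x : Fin n → ℝ | ∀ i, x i ∈ Set.Icc (0:ℝ) 1}
      = Set.pi Set.univ (fun _ => Set.Icc (0:ℝ) 1) := by
    ext x; simp only [Set.mem_setOf_eq, Set.mem_pi, Set.mem_univ, true_implies]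
  rw [this]
  exact isCompact_univ_pi fun i => isCompact_Icc

lemma polytope_subset_cube {n : ℕ} (S : Set (Fin n → ZMod 2)) :
    codewordPolytope S ⊆ {x : Fin n → ℝ | ∀ i, x i ∈ Set.Icc (0:ℝ) 1} := by
  apply convexHull_min _ cube_convex
  rintro x ⟨c, _, rfl⟩ i
  exact toReal_mem_cube c i

lemma polytope_compact {n : ℕ} (S : Set (Fin n → ZMod 2)) :
    IsCompact (codewordPolytope S) :=
  (S.toFinite.image toReal).isCompact_convexHull ℝ

/-- A 0/1 point of any subset of the cube is an extreme point of that subset. -/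
lemma extreme_of_01 {n : ℕ} {s : Set (Fin n → ℝ)}
    (hs : s ⊆ {x : Fin n → ℝ | ∀ i, x i ∈ Set.Icc (0:ℝ) 1}) {x : Fin n → ℝ}
    (hx : x ∈ s) (h01 : ∀ i, x i = 0 ∨ x i = 1) : x ∈ Set.extremePoints ℝ s := by
  refine ⟨hx, fun x₁ hx₁ x₂ hx₂ hseg => ?_⟩
  obtain ⟨a, b, ha, hb, hab, hsum⟩ := hseg
  have key : x₁ = x ∧ x₂ = x := by
    have h1 : ∀ i, x₁ i = x i ∧ x₂ i = x i := by
      intro i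
      have e : a * x₁ i + b * x₂ i = x i := congrFun hsum i
      have b1 := hs hx₁ i
      have b2 := hs hx₂ i
      simp only [Set.mem_Icc] at b1 b2
      rcases h01 i with h | h <;> rw [h] at e ⊢ <;> constructor <;> nlinarith
    exact ⟨funext fun i => (h1 i).1, funext fun i => (h1 i).2⟩
  exact key.1

lemma integral_mem_polytope {n : ℕ} {S : Set (Fin n → ZMod 2)} {x : Fin n → ℝ}
    (hx : x ∈ codewordPolytope S) (h01 : ∀ i, x i = 0 ∨ x i = 1) :
    ∃ c ∈ S, toReal c = x := by
  have hext : x ∈ Set.extremePoints ℝ (codewordPolytope S) :=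
    extreme_of_01 (polytope_subset_cube S) hx h01
  have := extremePoints_convexHull_subset hext
  obtain ⟨c, hc, rfl⟩ := this
  exact ⟨c, hc, rfl⟩

lemma Qpoly_convex {n : ℕ} (H : Set (Fin n → ZMod 2)) : Convex ℝ (Qpoly H) := by
  exact cube_convex.inter (convex_iInter fun h => convex_iInter fun _ => convex_convexHull ℝ _)

lemma Qpoly_compact {n : ℕ} (H : Set (Fin n → ZMod 2)) : IsCompact (Qpoly H) := by
  apply cube_compact.inter_right
  exact isClosed_biInter fun h _ => (polytope_compact _).isClosed

lemma Qpoly_anti {n : ℕ} {H H' : Set (Fin n → ZMod 2)} (h : H ⊆ H') : Qpoly H' ⊆ Qpoly H :=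
  Set.inter_subset_inter_right _ (Set.biInter_mono h (fun _ _ => le_rfl))

lemma P_subset_Q {n : ℕ} (C : Code n) :
    codewordPolytope (C : Set (Fin n → ZMod 2)) ⊆
      Qpoly ((dualCode C : Set (Fin n → ZMod 2))) := by
  apply convexHull_min _ (Qpoly_convex _)
  rintro x ⟨c, hc, rfl⟩
  refine ⟨fun i => toReal_mem_cube c i, ?_⟩
  simp only [Set.mem_iInter]
  intro h hh
  exact subset_convexHull ℝ _ ⟨c, hh c hc, rfl⟩

/-- there is a spanning subset `H ⊆ C⊥` whose fundamental polytope
`Q(H)` has no pseudocodewords iff `P(C) = Q(C⊥)`. -/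
theorem no_pseudocodewords_iff_geometrically_perfect {n : ℕ} (C : Code n) :
    (∃ H : Set (Fin n → ZMod 2), H ⊆ (dualCode C : Set (Fin n → ZMod 2)) ∧
        Submodule.span (ZMod 2) H = dualCode C ∧
        ∀ x ∈ Set.extremePoints ℝ (Qpoly H), ∀ i, x i = 0 ∨ x i = 1) ↔
    GeomPerfect C := by
  constructor
  · rintro ⟨H, hsub, hspan, hext⟩
    have hEP : Set.extremePoints ℝ (Qpoly H) ⊆ toReal '' (C : Set (Fin n → ZMod 2)) := by
      intro x hx
      have hxQ : x ∈ Qpoly H := hx.1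
      have h01 := hext x hx
      set c : Fin n → ZMod 2 := fun i => if x i = 1 then 1 else 0 with hcdef
      have htr : toReal c = x := by
        funext i
        have hone : ((1 : ZMod 2)).val = 1 := rfl
        rcases h01 i with h | h <;> simp [toReal, c, h, hone]
      have horth : ∀ h ∈ H, ∑ i, h i * c i = 0 := by
        intro h hh
        have hxP : x ∈ codewordPolytope {d | ∑ i, h i * d i = 0} := by
          have h2 := hxQ.2
          simp only [Set.mem_iInter] at h2
          exact h2 h hh
        obtain ⟨d, hd, hdx⟩ := integral_mem_polytope hxP h01
        have hdc : d = c := toReal_injective (hdx.trans htr.symm)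
        rwa [hdc] at hd
      have hcC : c ∈ C := by
        rw [← dual_dual C]
        intro h hh
        rw [← hspan] at hh
        have hle : Submodule.span (ZMod 2) H ≤ LinearMap.ker (dotForm n c) := by
          rw [Submodule.span_le]
          intro h' hh'
          simp only [SetLike.mem_coe, LinearMap.mem_ker]
          rw [dotForm_comm]
          exact horth h' hh'
        have := hle hh
        simpa [dotForm_apply] using this
      exact ⟨c, hcC, htr⟩
    have hQP : Qpoly H ⊆ codewordPolytope (C : Set (Fin n → ZMod 2)) := by
      calc Qpoly H = closure (convexHull ℝ (Set.extremePoints ℝ (Qpoly H))) :=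
            (closure_convexHull_extremePoints (Qpoly_compact H) (Qpoly_convex H)).symm
        _ ⊆ closure (convexHull ℝ (toReal '' (C : Set (Fin n → ZMod 2)))) :=
            closure_mono (convexHull_mono hEP)
        _ = codewordPolytope (C : Set (Fin n → ZMod 2)) :=
            (polytope_compact _).isClosed.closure_eq
    exact subset_antisymm (P_subset_Q C) ((Qpoly_anti hsub).trans hQP)
  · intro hGP
    have hGP' : codewordPolytope (C : Set (Fin n → ZMod 2))
        = Qpoly ((dualCode C : Set (Fin n → ZMod 2))) := hGP
    refine ⟨(dualCode C : Set (Fin n → ZMod 2)), subset_rfl, Submodule.span_eq _, ?_⟩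
    intro x hx i
    rw [← hGP'] at hx
    obtain ⟨c, _, rfl⟩ := extremePoints_convexHull_subset hx
    have hv : (c i).val = 0 ∨ (c i).val = 1 := by
      have := ZMod.val_lt (c i); omega
    rcases hv with h | h <;> simp [toReal, h]
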